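/- (Lemma 3.2) For every i = 1, …, l and every character ν : Q → ℂ^×, the map σ_{ω_i,ν} maps I_{λ_i} into I_{λ_0}: σ_{ω_i,ν}(I_{λ_i}) ⊆ I_{λ_0}. -/

import Mathlib

/-- The data of a finite-dimensional complex simple Lie algebra `𝔤` of type `A`, `D` or `E`
of rank `l`, recorded through: its Cartan matrix `M`; its set `Δ` of positive roots, each
written via its coordinates in the basis of simple roots (so the `i`-th simple root is
`Pi.single i 1`); and the affinization `𝔫̄ = 𝔫 ⊗ ℂ[t,t⁻¹]` of the nilpotent subalgebra
`𝔫 = ⊕_{α ∈ Δ} ℂx_α`, where `x α m` stands for `x_α ⊗ t^m`.  The weight lattice `P` is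
identified with `ℤ^l` via `λ ↦ (⟨λ, α_j⟩)_j`, so that `⟨λ, α⟩ = ∑_j ⟨λ, α_j⟩ α^j` for a
positive root `α` with simple-root coordinates `α^j`; in particular `⟨λ_i, α⟩ = α^i` and
`⟨α_i, α⟩ = ∑_j m_{ij} α^j`. -/
structure ADEContext where
  /-- the rank -/
  l : ℕ
  hl : 0 < l
  /-- the Cartan matrix -/
  M : Matrix (Fin l) (Fin l) ℤ
  M_symm : M.IsSymm
  M_diag : ∀ i, M i i = 2
  M_offdiag : ∀ i j, i ≠ j → M i j = 0 ∨ M i j = -1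
  M_posdef : (M.map ((↑) : ℤ → ℝ)).PosDef
  /-- the set of positive roots, in simple-root coordinates -/
  Δ : Finset (Fin l → ℤ)
  Δ_nonneg : ∀ α ∈ Δ, ∀ j, 0 ≤ α j
  Δ_ne_zero : ∀ α ∈ Δ, α ≠ 0
  simple_mem : ∀ i : Fin l, (Pi.single i 1 : Fin l → ℤ) ∈ Δ
  /-- every nonsimple positive root is a positive root plus a simple root -/
  Δ_decomp : ∀ α ∈ Δ, (∀ i : Fin l, α ≠ Pi.single i 1) →
    ∃ β ∈ Δ, ∃ i : Fin l, α = β + Pi.single i 1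
  /-- `α_i + α_j` is a root iff `i ≠ j` and `m_{ij} = -1` (simply-laced types) -/
  sum_simple_mem_iff : ∀ i j : Fin l,
    ((Pi.single i 1 + Pi.single j 1 : Fin l → ℤ) ∈ Δ) ↔ (i ≠ j ∧ M i j = -1)
  /-- `2α_i + α_j` is never a root (simply-laced types) -/
  two_simple_add_not_mem : ∀ i j : Fin l,
    ((2 : ℤ) • (Pi.single i 1 : Fin l → ℤ) + Pi.single j 1) ∉ Δ
  /-- the underlying type of the affinization `𝔫̄ = 𝔫 ⊗ ℂ[t,t⁻¹]` -/
  nbar : Type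
  [instLieRing : LieRing nbar]
  [instLieAlgebra : LieAlgebra ℂ nbar]
  /-- `x α m` is the element `x_α ⊗ t^m` of `𝔫̄` -/
  x : (Fin l → ℤ) → ℤ → nbar
  /-- the elements `x_α ⊗ t^m`, `α ∈ Δ`, `m ∈ ℤ`, form a `ℂ`-basis of `𝔫̄` -/
  basis : Module.Basis ({α // α ∈ Δ} × ℤ) ℂ nbar
  basis_eq : ∀ (α : {α // α ∈ Δ}) (m : ℤ), basis (α, m) = x α.1 m
  /-- the structure constants: `[x_α, x_β] = C_{α,β} x_{α+β}` -/
  C : (Fin l → ℤ) → (Fin l → ℤ) → ℂ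
  C_ne_zero : ∀ α ∈ Δ, ∀ β ∈ Δ, α + β ∈ Δ → C α β ≠ 0
  /-- the bracket `[x ⊗ t^m, y ⊗ t^n] = [x,y] ⊗ t^{m+n}` on `𝔫̄` -/
  bracket_x : ∀ α ∈ Δ, ∀ β ∈ Δ, ∀ m n : ℤ,
    ⁅x α m, x β n⁆ = if α + β ∈ Δ then C α β • x (α + β) (m + n) else 0

attribute [instance] ADEContext.instLieRing ADEContext.instLieAlgebra

namespace ADEContext

variable (ctx : ADEContext)

/-- the universal enveloping algebra `U(𝔫̄)` -/
abbrev U : Type := UniversalEnvelopingAlgebra ℂ ctx.nbar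

/-- the element `x_α(m) = x_α ⊗ t^m`, viewed in `U(𝔫̄)` -/
noncomputable def X (α : Fin ctx.l → ℤ) (m : ℤ) : ctx.U :=
  UniversalEnvelopingAlgebra.ι ℂ (ctx.x α m)

/-- the `i`-th simple root `α_i`, in simple-root coordinates -/
def sroot (i : Fin ctx.l) : Fin ctx.l → ℤ := Pi.single i 1

/-- the left ideal `U(𝔫̄)𝔫̄₊` of `U(𝔫̄)` generated by `𝔫̄₊ = 𝔫 ⊗ ℂ[t]` (equivalently, by the
elements `x_α(m)`, `α ∈ Δ`, `m ≥ 0`, which span `𝔫̄₊`) -/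
noncomputable def Uplus : Submodule ctx.U ctx.U :=
  Submodule.span ctx.U {u | ∃ α ∈ ctx.Δ, ∃ m : ℤ, 0 ≤ m ∧ u = ctx.X α m}

/-- the truncated relation `R^j_{-1,t} = ∑_{m₁,m₂ ≤ -1, m₁+m₂=-t} x_{α_j}(m₁)x_{α_j}(m₂)` -/
noncomputable def R (j : Fin ctx.l) (t : ℤ) : ctx.U :=
  ∑ m ∈ Finset.Icc (1 - t) (-1 : ℤ), ctx.X (ctx.sroot j) m * ctx.X (ctx.sroot j) (-t - m)

/-- the left ideal `J` of `U(𝔫̄)` generated by the `R^j_{-1,t}`, `j = 1, …, l`, `t ≥ 2` -/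
noncomputable def Jideal : Submodule ctx.U ctx.U :=
  Submodule.span ctx.U {u | ∃ j : Fin ctx.l, ∃ t : ℤ, 2 ≤ t ∧ u = ctx.R j t}

/-- the left ideal `I_{λ_0} = J + U(𝔫̄)𝔫̄₊` -/
noncomputable def I0 : Submodule ctx.U ctx.U := ctx.Jideal ⊔ ctx.Uplus

/-- the left ideal `I_{λ_i} = I_{λ_0} + U(𝔫̄)x_{α_i}(-1)`, `i = 1, …, l` -/
noncomputable def Ii (i : Fin ctx.l) : Submodule ctx.U ctx.U :=
  ctx.I0 ⊔ Submodule.span ctx.U {ctx.X (ctx.sroot i) (-1)}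

/-- the value `ν(α) = ∏_j ν_j^{α^j}` on `α ∈ Q` of the character `ν : Q → ℂ^×` determined by
`ν(α_j) = ν_j = νu j` -/
def charVal (νu : Fin ctx.l → ℂˣ) (α : Fin ctx.l → ℤ) : ℂ :=
  (∏ j, (νu j) ^ (α j) : ℂˣ)

end ADEContext

/-!
Since `τ` is multiplicative, `u ↦ τ u * x_{α_i}(-1)` is `τ`-semilinear for left multiplication,
so it suffices to treat the generators of `I_{λ_i}`. The generator `x_{α_i}(-1)` goes to a multiple
of `x_{α_i}(-2) x_{α_i}(-1) = R^i_{-1,3} / 2`. For `x_α(m)`, `m ≥ 0`, induct on the height of `α`: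
for a simple root the product is in `U(𝔫̄)𝔫̄₊` after commuting, or is `R^i_{-1,2}`, and otherwise
`x_α` is a commutator `[x_β, x_{α_k}]`. The relation `R^j_{-1,t}` goes to a multiple of a shifted
truncated square `∑ x_{α_j}(m) x_{α_j}(N - m)`: for `j = i` it differs from `R^i_{-1,t+2}` by
terms ending in `x_{α_i}(-1)²`; for `α_i ⊥ α_j` it commutes with `x_{α_i}(-1)`; for adjacent
`i, j` commuting it past `x_{α_i}(-1)` produces `x_{α_i+α_j}`-terms, which are controlled by the
commutator `[x_{α_i}(0), R^j_{-1,t-1}]`.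
-/

open Finset

section ConvSum

variable {A : Type*} [Ring A]

def convSum (f g : ℤ → A) (N : ℤ) (s : Finset ℤ) : A :=
  ∑ m ∈ s, f m * g (N - m)

theorem convSum_mul (f g : ℤ → A) (N : ℤ) (s : Finset ℤ) (a : A) :
    convSum f g N s * a = convSum f (fun m => g m * a) N s := by
  simp only [convSum, Finset.sum_mul, mul_assoc]

theorem convSum_comp_sub_left (f g : ℤ → A) (N c a b : ℤ) :
    convSum (fun m => f (m - c)) g N (Icc a b) = convSum f g (N - c) (Icc (a - c) (b - c)) := by
  simp only [convSum, sub_eq_add_neg, ← Finset.map_add_right_Icc, Finset.sum_map,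
    addRightEmbedding_apply]
  refine Finset.sum_congr rfl fun m _ => ?_
  congr 2
  abel

theorem convSum_comp_sub_right (f g : ℤ → A) (N c : ℤ) (s : Finset ℤ) :
    convSum f (fun m => g (m - c)) N s = convSum f g (N - c) s :=
  Finset.sum_congr rfl fun m _ => by rw [sub_right_comm]

theorem convSum_smul_left {R : Type*} [CommSemiring R] [Algebra R A] (c : R) (f g : ℤ → A)
    (N : ℤ) (s : Finset ℤ) : convSum (fun m => c • f m) g N s = c • convSum f g N s := by
  simp only [convSum, Finset.smul_sum, smul_mul_assoc]

theorem convSum_smul_right {R : Type*} [CommSemiring R] [Algebra R A] (c : R) (f g : ℤ → A)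
    (N : ℤ) (s : Finset ℤ) : convSum f (fun m => c • g m) N s = c • convSum f g N s := by
  simp only [convSum, Finset.smul_sum, mul_smul_comm]

theorem map_convSum {B F : Type*} [Ring B] [FunLike F A B] [RingHomClass F A B] (φ : F)
    (f g : ℤ → A) (N : ℤ) (s : Finset ℤ) :
    φ (convSum f g N s) = convSum (fun m => φ (f m)) (fun m => φ (g m)) N s := by
  simp only [convSum, map_sum, map_mul]

theorem Commute.convSum_left {f g : ℤ → A} {a : A} (hf : ∀ m, Commute (f m) a)
    (hg : ∀ m, Commute (g m) a) (N : ℤ) (s : Finset ℤ) : Commute (convSum f g N s) a :=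
  Commute.sum_left _ _ _ fun m _ => (hf m).mul_left (hg _)

theorem mul_convSum_self_sub_convSum_self_mul {a : A} {y w : ℤ → A}
    (hw : ∀ m, a * y m - y m * a = w m) (hyw : ∀ m n, Commute (y m) (w n)) {N : ℤ}
    {s : Finset ℤ} (hs : ∀ m ∈ s, N - m ∈ s) :
    a * convSum y y N s - convSum y y N s * a = convSum w y N s + convSum w y N s := by
  have hterm : ∀ m, a * (y m * y (N - m)) - y m * y (N - m) * a
      = w m * y (N - m) + w (N - m) * y m := fun m =>
    calc _ = (a * y m - y m * a) * y (N - m) + y m * (a * y (N - m) - y (N - m) * a) := by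
          noncomm_ring
      _ = _ := by rw [hw, hw, (hyw _ _).eq]
  -- the reflection `m ↦ N - m` of `s` exchanges the two halves of the commutator
  have hreflect : ∑ m ∈ s, w (N - m) * y m = convSum w y N s :=
    Finset.sum_nbij' (N - ·) (N - ·) hs hs (by simp) (by simp) (by simp)
  simp only [convSum, Finset.mul_sum, Finset.sum_mul, ← Finset.sum_sub_distrib, hterm,
    Finset.sum_add_distrib, hreflect]

theorem convSum_mem_iff_of_subset (p : Submodule A A) {f g : ℤ → A} {N : ℤ} {s t : Finset ℤ}
    (hst : s ⊆ t) (hf : ∀ m ∈ t \ s, f m * g (N - m) ∈ p) :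
    convSum f g N s ∈ p ↔ convSum f g N t ∈ p := by
  rw [convSum, convSum, ← Finset.sum_sdiff hst, p.add_mem_iff_right (p.sum_mem hf)]

end ConvSum

def RingHom.mulRightₛₗ {R S : Type*} [Semiring R] [Semiring S] (τ : R →+* S) (c : S) :
    R →ₛₗ[τ] S where
  toFun u := τ u * c
  map_add' _ _ := by rw [map_add, add_mul]
  map_smul' _ _ := by rw [smul_eq_mul, smul_eq_mul, map_mul, mul_assoc]

theorem Submodule.mem_comap_mulRightₛₗ {R S : Type*} [Semiring R] [Semiring S] (τ : R →+* S)
    (c : S) (q : Submodule S S) (u : R) : u ∈ q.comap (τ.mulRightₛₗ c) ↔ τ u * c ∈ q :=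
  Iff.rfl

theorem Submodule.smul_mem_iff_of_ne_zero {K A M : Type*} [Field K] [Semiring A]
    [AddCommMonoid M] [Module K M] [Module A M] [SMul K A] [IsScalarTower K A M]
    (p : Submodule A M) {c : K} (hc : c ≠ 0) {x : M} : c • x ∈ p ↔ x ∈ p :=
  ⟨fun h => by simpa [inv_smul_smul₀ hc] using p.smul_of_tower_mem c⁻¹ h,
    p.smul_of_tower_mem c⟩

namespace ADEContext

variable {ctx : ADEContext}

theorem X_mul_X_sub_X_mul_X {α β : Fin ctx.l → ℤ} (hα : α ∈ ctx.Δ) (hβ : β ∈ ctx.Δ) (m n : ℤ) :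
    ctx.X α m * ctx.X β n - ctx.X β n * ctx.X α m =
      if α + β ∈ ctx.Δ then ctx.C α β • ctx.X (α + β) (m + n) else 0 := by
  let := LieRing.ofAssociativeRing (A := ctx.U)
  let := LieAlgebra.ofAssociativeAlgebra (R := ℂ) (A := ctx.U)
  have h := (UniversalEnvelopingAlgebra.ι ℂ (L := ctx.nbar)).map_lie (ctx.x α m) (ctx.x β n)
  rw [ctx.bracket_x α hα β hβ m n, Ring.lie_def] at h
  split_ifs at h ⊢ <;> simpa [X] using h.symm

theorem X_mul_X_sub_X_mul_X_of_add_mem {α β : Fin ctx.l → ℤ} (hα : α ∈ ctx.Δ) (hβ : β ∈ ctx.Δ)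
    (hαβ : α + β ∈ ctx.Δ) (m n : ℤ) :
    ctx.X α m * ctx.X β n - ctx.X β n * ctx.X α m = ctx.C α β • ctx.X (α + β) (m + n) := by
  rw [X_mul_X_sub_X_mul_X hα hβ, if_pos hαβ]

theorem commute_X_of_add_not_mem {α β : Fin ctx.l → ℤ} (hα : α ∈ ctx.Δ) (hβ : β ∈ ctx.Δ)
    (hαβ : α + β ∉ ctx.Δ) (m n : ℤ) : Commute (ctx.X α m) (ctx.X β n) :=
  sub_eq_zero.mp (by rw [X_mul_X_sub_X_mul_X hα hβ, if_neg hαβ])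

theorem sroot_mem (j : Fin ctx.l) : ctx.sroot j ∈ ctx.Δ :=
  ctx.simple_mem j

theorem commute_X_sroot_self (j : Fin ctx.l) (m n : ℤ) :
    Commute (ctx.X (ctx.sroot j) m) (ctx.X (ctx.sroot j) n) :=
  commute_X_of_add_not_mem (sroot_mem j) (sroot_mem j)
    (fun h => ((ctx.sum_simple_mem_iff j j).mp h).1 rfl) m n

def pairOmega (ctx : ADEContext) (i : Fin ctx.l) (α : Fin ctx.l → ℤ) : ℤ :=
  (∑ j, ctx.M i j * α j) - α i

theorem pairOmega_add (i : Fin ctx.l) (α β : Fin ctx.l → ℤ) :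
    ctx.pairOmega i (α + β) = ctx.pairOmega i α + ctx.pairOmega i β := by
  simp only [pairOmega, Pi.add_apply, mul_add, Finset.sum_add_distrib]
  ring

theorem pairOmega_sroot (i j : Fin ctx.l) :
    ctx.pairOmega i (ctx.sroot j) = ctx.M i j - if j = i then 1 else 0 := by
  simp [pairOmega, sroot, Pi.single_apply, eq_comm]

theorem pairOmega_sroot_self (i : Fin ctx.l) : ctx.pairOmega i (ctx.sroot i) = 1 := by
  rw [pairOmega_sroot, if_pos rfl, ctx.M_diag]
  norm_num

theorem sroot_cases (i j : Fin ctx.l) :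
    j = i ∨ (ctx.sroot j + ctx.sroot i ∉ ctx.Δ ∧ ctx.pairOmega i (ctx.sroot j) = 0) ∨
      (ctx.sroot j + ctx.sroot i ∈ ctx.Δ ∧ ctx.pairOmega i (ctx.sroot j) = -1) := by
  rcases eq_or_ne j i with rfl | hji
  · exact Or.inl rfl
  have hmem : ctx.sroot j + ctx.sroot i ∈ ctx.Δ ↔ ctx.M i j = -1 := by
    rw [sroot, sroot, ctx.sum_simple_mem_iff j i, ctx.M_symm.apply i j]
    exact and_iff_right hji
  rw [pairOmega_sroot, if_neg hji, sub_zero, hmem]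
  rcases ctx.M_offdiag i j hji.symm with h | h <;> simp [h]

theorem X_mem_I0 {α : Fin ctx.l → ℤ} (hα : α ∈ ctx.Δ) {m : ℤ} (hm : 0 ≤ m) :
    ctx.X α m ∈ ctx.I0 :=
  Submodule.mem_sup_right (Submodule.subset_span ⟨α, hα, m, hm, rfl⟩)

theorem mul_X_mem_I0 (a : ctx.U) {α : Fin ctx.l → ℤ} (hα : α ∈ ctx.Δ) {m : ℤ} (hm : 0 ≤ m) :
    a * ctx.X α m ∈ ctx.I0 :=
  Ideal.mul_mem_left _ a (X_mem_I0 hα hm)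

theorem R_eq_convSum (j : Fin ctx.l) (t : ℤ) :
    ctx.R j t = convSum (ctx.X (ctx.sroot j)) (ctx.X (ctx.sroot j)) (-t) (Icc (1 - t) (-1)) :=
  rfl

theorem convSum_X_sroot_mem_I0 (j : Fin ctx.l) {N lo : ℤ} (hN : N = lo - 1) :
    convSum (ctx.X (ctx.sroot j)) (ctx.X (ctx.sroot j)) N (Icc lo (-1)) ∈ ctx.I0 := by
  obtain rfl : lo = 1 - -N := by omega
  rcases le_or_gt 2 (-N) with hN2 | hN2
  · refine Submodule.mem_sup_left (Submodule.subset_span ⟨j, -N, hN2, ?_⟩)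
    rw [R_eq_convSum, neg_neg]
  · rw [Finset.Icc_eq_empty (by omega)]
    exact Submodule.zero_mem _

theorem X_sroot_neg_one_mul_self_mem_I0 (j : Fin ctx.l) :
    ctx.X (ctx.sroot j) (-1) * ctx.X (ctx.sroot j) (-1) ∈ ctx.I0 := by
  simpa [convSum] using convSum_X_sroot_mem_I0 j (N := -2) (lo := -1) (by norm_num)

theorem X_sroot_neg_two_mul_X_sroot_neg_one_mem_I0 (j : Fin ctx.l) :
    ctx.X (ctx.sroot j) (-2) * ctx.X (ctx.sroot j) (-1) ∈ ctx.I0 := by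
  have h := convSum_X_sroot_mem_I0 j (N := -3) (lo := -2) (by norm_num)
  rw [convSum, show Icc (-2 : ℤ) (-1) = {-2, -1} by ext; simp only [mem_Icc, mem_insert, mem_singleton]; omega,
    Finset.sum_pair (by norm_num), show (-3 : ℤ) - -2 = -1 by norm_num,
    show (-3 : ℤ) - -1 = -2 by norm_num, (commute_X_sroot_self j (-1) (-2)).eq, ← two_smul ℂ,
    Submodule.smul_mem_iff_of_ne_zero _ two_ne_zero] at h
  exact h

theorem X_sroot_mul_X_sroot_neg_one_mem_I0 {i j : Fin ctx.l} {n : ℤ}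
    (hn : 0 ≤ n + ctx.pairOmega i (ctx.sroot j)) :
    ctx.X (ctx.sroot j) n * ctx.X (ctx.sroot i) (-1) ∈ ctx.I0 := by
  rcases sroot_cases i j with rfl | ⟨hji, hd⟩ | ⟨hji, hd⟩
  · rw [pairOmega_sroot_self] at hn
    rcases (by omega : n = -1 ∨ 0 ≤ n) with rfl | hn
    · exact X_sroot_neg_one_mul_self_mem_I0 j
    · rw [(commute_X_sroot_self j n (-1)).eq]
      exact mul_X_mem_I0 _ (sroot_mem j) hn
  · rw [(commute_X_of_add_not_mem (sroot_mem j) (sroot_mem i) hji n (-1)).eq]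
    exact mul_X_mem_I0 _ (sroot_mem j) (by omega)
  · rw [← sub_add_cancel (ctx.X _ n * _) (ctx.X _ (-1) * ctx.X _ n),
      X_mul_X_sub_X_mul_X_of_add_mem (sroot_mem j) (sroot_mem i) hji]
    exact add_mem (Submodule.smul_of_tower_mem _ _ (X_mem_I0 hji (by omega)))
      (Ideal.mul_mem_left _ _ (X_mem_I0 (sroot_mem j) (by omega)))

theorem X_mul_X_sroot_neg_one_mem_I0 (i : Fin ctx.l) {α : Fin ctx.l → ℤ} (hα : α ∈ ctx.Δ)
    {n : ℤ} (hn : 0 ≤ n + ctx.pairOmega i α) :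
    ctx.X α n * ctx.X (ctx.sroot i) (-1) ∈ ctx.I0 := by
  by_cases hsimple : ∀ k, α ≠ Pi.single k 1
  · obtain ⟨β, hβ, k, hαβ⟩ := ctx.Δ_decomp α hα hsimple
    obtain rfl : α = β + ctx.sroot k := hαβ
    set d := ctx.pairOmega i (ctx.sroot k)
    rw [pairOmega_add] at hn
    have hβz : ctx.X β (n + d) * ctx.X (ctx.sroot i) (-1) ∈ ctx.I0 :=
      X_mul_X_sroot_neg_one_mem_I0 i hβ (by omega)
    have hkz : ctx.X (ctx.sroot k) (-d) * ctx.X (ctx.sroot i) (-1) ∈ ctx.I0 :=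
      X_sroot_mul_X_sroot_neg_one_mem_I0 (by omega)
    have hcomm := X_mul_X_sub_X_mul_X_of_add_mem hβ (sroot_mem k) hα (n + d) (-d)
    rw [add_neg_cancel_right] at hcomm
    rw [← Submodule.smul_mem_iff_of_ne_zero _ (ctx.C_ne_zero β hβ _ (sroot_mem k) hα),
      ← smul_mul_assoc, ← hcomm, sub_mul, mul_assoc, mul_assoc]
    exact sub_mem (Ideal.mul_mem_left _ _ hkz) (Ideal.mul_mem_left _ _ hβz)
  · push Not at hsimple
    obtain ⟨k, rfl⟩ := hsimple
    exact X_sroot_mul_X_sroot_neg_one_mem_I0 hn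
termination_by (∑ j, α j).toNat
decreasing_by
  have := Finset.sum_nonneg fun j (_ : j ∈ Finset.univ) => ctx.Δ_nonneg β hβ j
  subst_vars
  simp only [Pi.add_apply, Finset.sum_add_distrib, Finset.sum_pi_single', Finset.mem_univ,
    if_true]
  omega

theorem convSum_X_sroot_Icc_zero_mem_I0 (j : Fin ctx.l) (lo : ℤ) :
    convSum (ctx.X (ctx.sroot j)) (ctx.X (ctx.sroot j)) lo (Icc lo 0) ∈ ctx.I0 := by
  refine (convSum_mem_iff_of_subset _ (Icc_subset_Icc (by omega) (by omega)) fun m hm => ?_).mp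
    (convSum_X_sroot_mem_I0 j (lo := lo + 1) (by ring))
  simp only [mem_sdiff, mem_Icc] at hm
  rcases (by omega : m = lo ∨ m = 0) with rfl | rfl
  · rw [sub_self]
    exact mul_X_mem_I0 _ (sroot_mem j) le_rfl
  · rw [sub_zero, (commute_X_sroot_self j 0 lo).eq]
    exact mul_X_mem_I0 _ (sroot_mem j) le_rfl

theorem convSum_X_sroot_mul_X_sroot_neg_one_mem_I0_self (i : Fin ctx.l) {N lo : ℤ}
    (hN : N = lo - 2) :
    convSum (ctx.X (ctx.sroot i)) (ctx.X (ctx.sroot i)) N (Icc lo (-2)) *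
      ctx.X (ctx.sroot i) (-1) ∈ ctx.I0 := by
  have hR : convSum (ctx.X (ctx.sroot i)) (ctx.X (ctx.sroot i)) N (Icc (lo - 1) (-1)) *
      ctx.X (ctx.sroot i) (-1) ∈ ctx.I0 := by
    rw [(Commute.convSum_left (fun m => commute_X_sroot_self i m (-1))
      (fun m => commute_X_sroot_self i m (-1)) _ _).eq]
    exact Ideal.mul_mem_left _ _ (convSum_X_sroot_mem_I0 i (by omega))
  rw [convSum_mul] at hR ⊢
  refine (convSum_mem_iff_of_subset _ (Icc_subset_Icc (by omega) (by omega)) fun m hm => ?_).mpr hR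
  simp only [mem_sdiff, mem_Icc] at hm
  rcases (by omega : m = lo - 1 ∨ m = -1) with rfl | rfl
  · rw [show N - (lo - 1) = -1 by omega]
    exact Ideal.mul_mem_left _ _ (X_sroot_neg_one_mul_self_mem_I0 i)
  · rw [← mul_assoc, (commute_X_sroot_self i (-1) _).eq, mul_assoc]
    exact Ideal.mul_mem_left _ _ (X_sroot_neg_one_mul_self_mem_I0 i)

theorem convSum_X_sroot_mul_X_sroot_neg_one_mem_I0_of_add_mem {i j : Fin ctx.l}
    (hji : ctx.sroot j + ctx.sroot i ∈ ctx.Δ) (lo : ℤ) :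
    convSum (ctx.X (ctx.sroot j)) (ctx.X (ctx.sroot j)) lo (Icc lo 0) *
      ctx.X (ctx.sroot i) (-1) ∈ ctx.I0 := by
  set y := ctx.X (ctx.sroot j)
  set γ := ctx.sroot j + ctx.sroot i
  set C := ctx.C (ctx.sroot j) (ctx.sroot i)
  have hC : C ≠ 0 := ctx.C_ne_zero _ (sroot_mem j) _ (sroot_mem i) hji
  have hbracket : ∀ n m, ctx.X (ctx.sroot i) n * y m - y m * ctx.X (ctx.sroot i) n =
      (-C) • ctx.X γ (m + n) := fun n m => by
    rw [neg_smul, ← X_mul_X_sub_X_mul_X_of_add_mem (sroot_mem j) (sroot_mem i) hji, neg_sub]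
  have hyγ : ∀ n m k, Commute (y m) ((-C) • ctx.X γ (k + n)) := by
    have hjγ : ctx.sroot j + γ ∉ ctx.Δ := by
      rw [show ctx.sroot j + γ = (2 : ℤ) • ctx.sroot j + ctx.sroot i by rw [two_smul, add_assoc]]
      exact ctx.two_simple_add_not_mem j i
    exact fun n m k => (commute_X_of_add_not_mem (sroot_mem j) hji hjγ m (k + n)).smul_right _
  have hS : convSum (ctx.X γ) y (lo - 1) (Icc (lo - 1) (-1)) ∈ ctx.I0 := by
    have h0 := mul_convSum_self_sub_convSum_self_mul (hbracket 0) (hyγ 0) (N := lo - 1)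
      (s := Icc lo (-1)) fun m hm => by simp only [mem_Icc] at hm ⊢; omega
    simp only [add_zero, convSum_smul_left] at h0
    have hsub : convSum (ctx.X γ) y (lo - 1) (Icc lo (-1)) ∈ ctx.I0 := by
      rw [← Submodule.smul_mem_iff_of_ne_zero _ (mul_ne_zero two_ne_zero (neg_ne_zero.mpr hC)),
        mul_smul, two_smul, ← h0]
      exact sub_mem (Ideal.mul_mem_left _ _ (convSum_X_sroot_mem_I0 j (by ring)))
        (mul_X_mem_I0 _ (sroot_mem i) le_rfl)
    refine (convSum_mem_iff_of_subset _ (Icc_subset_Icc (by omega) le_rfl) fun m hm => ?_).mp hsub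
    simp only [mem_sdiff, mem_Icc] at hm
    obtain rfl : m = lo - 1 := by omega
    rw [sub_self]
    exact mul_X_mem_I0 _ (sroot_mem j) le_rfl
  have hA := mul_convSum_self_sub_convSum_self_mul (hbracket (-1)) (hyγ (-1)) (N := lo)
    (s := Icc lo 0) fun m hm => by simp only [mem_Icc] at hm ⊢; omega
  have hshift : convSum (fun m => ctx.X γ (m - 1)) y lo (Icc lo 0) =
      convSum (ctx.X γ) y (lo - 1) (Icc (lo - 1) (-1)) := by
    simpa using convSum_comp_sub_left (ctx.X γ) y lo 1 lo 0
  simp only [← sub_eq_add_neg, convSum_smul_left, hshift] at hA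
  rw [← sub_sub_cancel (ctx.X (ctx.sroot i) (-1) * _) (_ * ctx.X (ctx.sroot i) (-1)), hA]
  exact sub_mem (Ideal.mul_mem_left _ _ (convSum_X_sroot_Icc_zero_mem_I0 j lo))
    (add_mem (Submodule.smul_of_tower_mem _ _ hS) (Submodule.smul_of_tower_mem _ _ hS))

theorem map_R_mul_X_sroot_neg_one_mem_I0 {F : Type*} [FunLike F ctx.U ctx.U]
    [RingHomClass F ctx.U ctx.U] {i : Fin ctx.l} (τ : F) (c : (Fin ctx.l → ℤ) → ℂ)
    (hτ : ∀ α ∈ ctx.Δ, ∀ m, τ (ctx.X α m) = c α • ctx.X α (m - ctx.pairOmega i α))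
    (j : Fin ctx.l) (t : ℤ) : τ (ctx.R j t) * ctx.X (ctx.sroot i) (-1) ∈ ctx.I0 := by
  have hτR : τ (ctx.R j t) = (c (ctx.sroot j) * c (ctx.sroot j)) •
      convSum (ctx.X (ctx.sroot j)) (ctx.X (ctx.sroot j))
        (-t - ctx.pairOmega i (ctx.sroot j) - ctx.pairOmega i (ctx.sroot j))
        (Icc (1 - t - ctx.pairOmega i (ctx.sroot j)) (-1 - ctx.pairOmega i (ctx.sroot j))) := by
    rw [R_eq_convSum, map_convSum]
    simp only [hτ _ (sroot_mem j)]
    rw [convSum_smul_left, convSum_smul_right, smul_smul, convSum_comp_sub_left,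
      convSum_comp_sub_right]
  rw [hτR, smul_mul_assoc]
  refine Submodule.smul_of_tower_mem _ _ ?_
  rcases sroot_cases i j with rfl | ⟨hji, hd⟩ | ⟨hji, hd⟩
  · rw [pairOmega_sroot_self, show (-1 : ℤ) - 1 = -2 by norm_num]
    exact convSum_X_sroot_mul_X_sroot_neg_one_mem_I0_self j (by ring)
  · have hcomm m := commute_X_of_add_not_mem (sroot_mem j) (sroot_mem i) hji m (-1)
    rw [(Commute.convSum_left hcomm hcomm _ _).eq, hd]
    simp only [sub_zero]
    exact Ideal.mul_mem_left _ _ (convSum_X_sroot_mem_I0 j (by ring))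
  · rw [hd, show (-1 : ℤ) - -1 = 0 by norm_num,
      show -t - -1 - -1 = 1 - t - -1 by ring]
    exact convSum_X_sroot_mul_X_sroot_neg_one_mem_I0_of_add_mem hji _

end ADEContext

/-- (Lemma 3.2)  For every `i = 1, …, l` and every character `ν : Q → ℂ^×` (determined by its
values `νu j = ν(α_j)`), the map `σ_{ω_i,ν} : a ↦ τ_{ω_i,ν}(a) x_{α_i}(-1)` maps `I_{λ_i}`
into `I_{λ_0}`.  Here `τ` is the extension to `U(𝔫̄)` of `τ_{ω_i,ν}`, i.e. the algebra
automorphism acting on generators by `x_α(m) ↦ ν(α) x_α(m - ⟨ω_i, α⟩)`, where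
`ω_i = α_i - λ_i`, so that `⟨ω_i, α⟩ = (∑_j m_{ij} α^j) - α^i` for `α` with simple-root
coordinates `α^j`. -/
theorem sigma_omega_maps_Ii_into_I0 (ctx : ADEContext) (i : Fin ctx.l)
    (νu : Fin ctx.l → ℂˣ) (τ : ctx.U ≃ₐ[ℂ] ctx.U)
    (hτ : ∀ α ∈ ctx.Δ, ∀ m : ℤ,
      τ (ctx.X α m) = ctx.charVal νu α • ctx.X α (m - ((∑ j, ctx.M i j * α j) - α i))) :
    ∀ u ∈ ctx.Ii i, τ u * ctx.X (ctx.sroot i) (-1) ∈ ctx.I0 := by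
  open ADEContext in
  have hτ' : ∀ α ∈ ctx.Δ, ∀ m,
      τ (ctx.X α m) = ctx.charVal νu α • ctx.X α (m - ctx.pairOmega i α) := hτ
  suffices ctx.Ii i ≤ ctx.I0.comap ((τ : ctx.U →+* ctx.U).mulRightₛₗ (ctx.X (ctx.sroot i) (-1)))
    from fun u hu => this hu
  refine sup_le (sup_le (Submodule.span_le.mpr ?_) (Submodule.span_le.mpr ?_))
    (Submodule.span_le.mpr (Set.singleton_subset_iff.mpr ?_))
  · rintro _ ⟨j, t, -, rfl⟩
    exact map_R_mul_X_sroot_neg_one_mem_I0 τ _ hτ' j t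
  · rintro _ ⟨α, hα, m, hm, rfl⟩
    rw [SetLike.mem_coe, Submodule.mem_comap_mulRightₛₗ, RingHom.coe_coe, hτ' α hα,
      smul_mul_assoc]
    exact Submodule.smul_of_tower_mem _ _ (X_mul_X_sroot_neg_one_mem_I0 i hα (by omega))
  · rw [SetLike.mem_coe, Submodule.mem_comap_mulRightₛₗ, RingHom.coe_coe,
      hτ' _ (sroot_mem i), pairOmega_sroot_self, smul_mul_assoc]
    exact Submodule.smul_of_tower_mem _ _ (X_sroot_neg_two_mul_X_sroot_neg_one_mem_I0 i)
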